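/- arXiv:1905.05528 — 2 statements merged into one kernel-verified Lean document; each statement's English description precedes it below -/
import Mathlib

section
/- Let V be a finite type and G : Finset V → V → ℝ. For a duplicate-free list [v₁, …, v_s] of elements of V, define the telescoping sum of G along the list as Σ_{i=1}^{s} G({v₁, …, v_{i−1}}, v_i). If G is unordered, i.e. for any two duplicate-free lists whose underlying finsets are equal the telescoping sums of G along them coincide, then there exists a function f : Finset V → ℝ with f(∅) = 0 such that for every X ⊆ V and every v ∉ X, f(X ∪ {v}) = f(X) + G(X, v). -/
/-!
Take `f X` to be the telescoping sum along an arbitrary enumeration of `X`. Enumerating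
`insert v X` with `v` last gives the recursion, and unorderedness says the choice of
enumeration does not matter.
-/

/-- The telescoping sum of `G` along a list `[v₁, …, v_s]`:
`∑ i, G {v₁, …, v_{i-1}} vᵢ`. -/
noncomputable def teleSum {V : Type*} [DecidableEq V]
    (G : Finset V → V → ℝ) (l : List V) : ℝ :=
  ∑ i : Fin l.length, G ((l.take i).toFinset) (l.get i)

section TeleSum

variable {V : Type*} [DecidableEq V]

theorem teleSum_nil (G : Finset V → V → ℝ) : teleSum G [] = 0 := by
  simp [teleSum]

theorem teleSum_cons (G : Finset V → V → ℝ) (a : V) (l : List V) :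
    teleSum G (a :: l) = G ∅ a + teleSum (fun S w => G (insert a S) w) l := by
  simp [teleSum, Fin.sum_univ_succ]

theorem teleSum_append_singleton (G : Finset V → V → ℝ) (l : List V) (v : V) :
    teleSum G (l ++ [v]) = teleSum G l + G l.toFinset v := by
  induction l generalizing G with
  | nil => simp [teleSum]
  | cons a l ih =>
    rw [List.cons_append, teleSum_cons, ih, teleSum_cons, List.toFinset_cons, add_assoc]

end TeleSum

theorem stmt1_general {V : Type*} [DecidableEq V]
    (G : Finset V → V → ℝ)
    (hG_unordered : ∀ l₁ l₂ : List V, l₁.Nodup → l₂.Nodup →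
      l₁.toFinset = l₂.toFinset → teleSum G l₁ = teleSum G l₂) :
    ∃ f : Finset V → ℝ, f ∅ = 0 ∧
      ∀ (X : Finset V) (v : V), v ∉ X → f (insert v X) = f X + G X v := by
  refine ⟨fun X => teleSum G X.toList, by simp [teleSum_nil], fun X v hv => ?_⟩
  have hnodup : (X.toList ++ [v]).Nodup := by
    simpa [List.nodup_append, hv] using X.nodup_toList
  calc teleSum G (insert v X).toList = teleSum G (X.toList ++ [v]) :=
        hG_unordered _ _ (Finset.nodup_toList _) hnodup (by ext; simp)
    _ = teleSum G X.toList + G X v := by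
        rw [teleSum_append_singleton, Finset.toList_toFinset]

/-- if `G` is unordered (telescoping sums along duplicate-free lists only
depend on the underlying finset), then there exists an accumulation function `f` with
`f ∅ = 0` and `f (X ∪ {v}) = f X + G X v` for `v ∉ X`. -/
theorem stmt1 {V : Type*} [Fintype V] [DecidableEq V]
    (G : Finset V → V → ℝ)
    (hG_unordered : ∀ l₁ l₂ : List V, l₁.Nodup → l₂.Nodup →
      l₁.toFinset = l₂.toFinset → teleSum G l₁ = teleSum G l₂) :
    ∃ f : Finset V → ℝ, f ∅ = 0 ∧
      ∀ (X : Finset V) (v : V), v ∉ X → f (insert v X) = f X + G X v :=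
  stmt1_general G hG_unordered
end

section
/- Let B > 0 and let δ₂, …, δ_{t+1} be real numbers with 0 ≤ δ_k ≤ B for all k and Σ_{k=2}^{t+1} δ_k ≥ B, and let F ≥ 0 be a real number. Then 1 − ∏_{k=2}^{t+1} (1 − δ_k / B) > 0 and F / (1 − e^{−1}) ≥ F / (1 − ∏_{k=2}^{t+1} (1 − δ_k / B)). -/
/-! Since `1 - x ≤ exp (-x)` and each factor `1 - δₖ/B` is nonnegative, the product is at most
`exp (-∑ δₖ/B) ≤ exp (-1) < 1`. -/

open Real

theorem Real.prod_one_sub_le_exp_neg_sum {ι : Type*} (s : Finset ι) (x : ι → ℝ)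
    (hx : ∀ i ∈ s, x i ≤ 1) : ∏ i ∈ s, (1 - x i) ≤ exp (-∑ i ∈ s, x i) := by
  rw [← Finset.sum_neg_distrib, exp_sum]
  exact Finset.prod_le_prod (fun i hi ↦ sub_nonneg.2 (hx i hi)) fun i _ ↦ one_sub_le_exp_neg (x i)

theorem Real.prod_one_sub_div_le_exp_neg_one {ι : Type*} (s : Finset ι) (δ : ι → ℝ) {B : ℝ}
    (hB : 0 < B) (hδB : ∀ i ∈ s, δ i ≤ B) (hsum : B ≤ ∑ i ∈ s, δ i) :
    ∏ i ∈ s, (1 - δ i / B) ≤ exp (-1) :=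
  calc ∏ i ∈ s, (1 - δ i / B)
      ≤ exp (-∑ i ∈ s, δ i / B) :=
        prod_one_sub_le_exp_neg_sum s _ fun i hi ↦ (div_le_one hB).2 (hδB i hi)
    _ ≤ exp (-1) := by
        rw [← Finset.sum_div]
        exact exp_le_exp.2 (neg_le_neg ((one_le_div hB).2 hsum))

theorem stmt9_general (B : ℝ) (hB : 0 < B) (t : ℕ) (δ : ℕ → ℝ)
    (hδB : ∀ k ∈ Finset.Icc 2 (t + 1), δ k ≤ B)
    (hsum : B ≤ ∑ k ∈ Finset.Icc 2 (t + 1), δ k)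
    (F : ℝ) (hF : 0 ≤ F) :
    0 < 1 - ∏ k ∈ Finset.Icc 2 (t + 1), (1 - δ k / B) ∧
    F / (1 - ∏ k ∈ Finset.Icc 2 (t + 1), (1 - δ k / B)) ≤
      F / (1 - Real.exp (-1)) := by
  have hprod := prod_one_sub_div_le_exp_neg_one _ δ hB hδB hsum
  have hexp : exp (-1) < 1 := exp_lt_one_iff.2 (by norm_num)
  exact ⟨by linarith, div_le_div_of_nonneg_left hF (sub_pos.2 hexp) (by linarith)⟩

/-- under the GCB-increment hypotheses, the denominator
`1 - ∏ (1 - δₖ/B)` is positive and `F/(1 - e⁻¹) ≥ F/(1 - ∏ (1 - δₖ/B))`. -/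
theorem stmt9 (B : ℝ) (hB : 0 < B) (t : ℕ) (δ : ℕ → ℝ)
    (hδ0 : ∀ k ∈ Finset.Icc 2 (t + 1), 0 ≤ δ k)
    (hδB : ∀ k ∈ Finset.Icc 2 (t + 1), δ k ≤ B)
    (hsum : B ≤ ∑ k ∈ Finset.Icc 2 (t + 1), δ k)
    (F : ℝ) (hF : 0 ≤ F) :
    0 < 1 - ∏ k ∈ Finset.Icc 2 (t + 1), (1 - δ k / B) ∧
    F / (1 - ∏ k ∈ Finset.Icc 2 (t + 1), (1 - δ k / B)) ≤
      F / (1 - Real.exp (-1)) :=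
  stmt9_general B hB t δ hδB hsum F hF
end
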